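/- Let E be a collection of labeled ABox-FullCQ examples containing an inconsistent negative example (A, q), and let E' be obtained from E by replacing (A, q) with the negative example (A, X(a)), where X is a concept name not mentioned in E and a ∈ ind(A) is arbitrary. Then for L ∈ {ALC, ALCI}, there is an L-ontology that fits E if and only if there is one that fits E'. -/

import Mathlib

/-!
Formalization background for "Fitting Ontologies to ABox-Query Examples":
description logics ALC / ALCI / ALCQ, ABoxes, interpretations (with standard
names assumption), ontologies, queries (AQ / CQ / full CQ / UCQ), fitting
problems, homomorphisms, forest models, unravelings, etc.
-/

namespace DLFit

/-- Roles: role names and inverse roles (both indexed by natural numbers). -/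
inductive DLRole : Type
  | name (r : ℕ)
  | inv (r : ℕ)
deriving DecidableEq

/-- Concepts of ALCIQ, a common superlanguage of ALC, ALCI and ALCQ. -/
inductive Concept : Type
  | top
  | atom (A : ℕ)
  | neg (C : Concept)
  | inter (C D : Concept)
  | ex (r : DLRole) (C : Concept)
  | atLeast (n : ℕ) (r : DLRole) (C : Concept)
  | atMost (n : ℕ) (r : DLRole) (C : Concept)
deriving DecidableEq

/-- A concept uses no inverse roles. -/
def Concept.invFree : Concept → Prop
  | .top => True
  | .atom _ => True
  | .neg C => C.invFree
  | .inter C D => C.invFree ∧ D.invFree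
  | .ex r C => (∃ m, r = DLRole.name m) ∧ C.invFree
  | .atLeast _ r C => (∃ m, r = DLRole.name m) ∧ C.invFree
  | .atMost _ r C => (∃ m, r = DLRole.name m) ∧ C.invFree

/-- A concept uses no qualified number restrictions. -/
def Concept.countFree : Concept → Prop
  | .top => True
  | .atom _ => True
  | .neg C => C.countFree
  | .inter C D => C.countFree ∧ D.countFree
  | .ex _ C => C.countFree
  | .atLeast _ _ _ => False
  | .atMost _ _ _ => False

/-- An ontology is a finite set of concept inclusions `C ⊑ D`. -/
abbrev Ontology := Finset (Concept × Concept)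

/-- The two ontology languages considered: ALC and ALCI. -/
inductive DL : Type
  | alc
  | alci
deriving DecidableEq

/-- Membership of an ontology in ALC resp. ALCI. -/
def OntologyInLang : DL → Ontology → Prop
  | .alc, O => ∀ ci ∈ O, ci.1.invFree ∧ ci.1.countFree ∧ ci.2.invFree ∧ ci.2.countFree
  | .alci, O => ∀ ci ∈ O, ci.1.countFree ∧ ci.2.countFree

/-- An ALCQ-ontology: no inverse roles (number restrictions allowed). -/
def OntologyIsALCQ (O : Ontology) : Prop := ∀ ci ∈ O, ci.1.invFree ∧ ci.2.invFree

/-- ABox assertions `A(a)` and `r(a,b)`. -/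
inductive Assertion : Type
  | conc (A : ℕ) (a : ℕ)
  | role (r : ℕ) (a b : ℕ)
deriving DecidableEq

/-- An ABox is a finite set of assertions. -/
abbrev ABox := Finset Assertion

def AssertionInds : Assertion → Finset ℕ
  | .conc _ a => {a}
  | .role _ a b => {a, b}

/-- The individual names occurring in an ABox. -/
def ABoxInds (A : ABox) : Finset ℕ := A.biUnion AssertionInds

def AssertionCNs : Assertion → Finset ℕ
  | .conc P _ => {P}
  | .role _ _ _ => ∅

/-- The concept names occurring in an ABox. -/
def ABoxCNs (A : ABox) : Finset ℕ := A.biUnion AssertionCNs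

/-- An interpretation, with the standard names assumption: every individual
name denotes itself, i.e. the (injective) map `indI` embeds the individual
names into the domain. -/
structure Interp : Type 1 where
  Dom : Type
  indI : ℕ → Dom
  indI_inj : Function.Injective indI
  concI : ℕ → Set Dom
  roleI : ℕ → Set (Dom × Dom)

/-- Semantics of (possibly inverse) roles. -/
def Interp.rSem (I : Interp) : DLRole → Set (I.Dom × I.Dom)
  | .name r => I.roleI r
  | .inv r => {p | (p.2, p.1) ∈ I.roleI r}

/-- Semantics of concepts. -/
def Interp.cSem (I : Interp) : Concept → Set I.Dom
  | .top => Set.univ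
  | .atom A => I.concI A
  | .neg C => (I.cSem C)ᶜ
  | .inter C D => I.cSem C ∩ I.cSem D
  | .ex r C => {d | ∃ e, (d, e) ∈ I.rSem r ∧ e ∈ I.cSem C}
  | .atLeast n r C => {d | (n : ℕ∞) ≤ {e | (d, e) ∈ I.rSem r ∧ e ∈ I.cSem C}.encard}
  | .atMost n r C => {d | {e | (d, e) ∈ I.rSem r ∧ e ∈ I.cSem C}.encard ≤ (n : ℕ∞)}

/-- `I` is a model of the ontology `O`. -/
def Interp.IsModelOf (I : Interp) (O : Ontology) : Prop :=
  ∀ ci ∈ O, I.cSem ci.1 ⊆ I.cSem ci.2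

def Interp.SatAssertion (I : Interp) : Assertion → Prop
  | .conc P a => I.indI a ∈ I.concI P
  | .role r a b => (I.indI a, I.indI b) ∈ I.roleI r

/-- `I` is a model of the ABox `A` (individual names interpreted as themselves). -/
def Interp.SatABox (I : Interp) (A : ABox) : Prop := ∀ α ∈ A, I.SatAssertion α

/-- An ABox is consistent with an ontology if they have a common model. -/
def ConsistentWith (A : ABox) (O : Ontology) : Prop :=
  ∃ I : Interp, I.IsModelOf O ∧ I.SatABox A

/-- Homomorphism between ABoxes (need not fix individual names). -/
def ABoxHom (h : ℕ → ℕ) (A B : ABox) : Prop :=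
  (∀ P a, Assertion.conc P a ∈ A → Assertion.conc P (h a) ∈ B) ∧
  (∀ r a b, Assertion.role r a b ∈ A → Assertion.role r (h a) (h b) ∈ B)

/-- Homomorphism from an ABox into an interpretation. -/
def ABoxIHom (I : Interp) (h : ℕ → I.Dom) (A : ABox) : Prop :=
  (∀ P a, Assertion.conc P a ∈ A → h a ∈ I.concI P) ∧
  (∀ r a b, Assertion.role r a b ∈ A → (h a, h b) ∈ I.roleI r)

/-- Local injectivity of a homomorphism on an ABox. -/
def LocInj {D : Type} (h : ℕ → D) (A : ABox) : Prop :=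
  ∀ r a b c, Assertion.role r a b ∈ A → Assertion.role r a c ∈ A → h b = h c → b = c

/-- The ABoxes in a collection of examples have pairwise disjoint individual names. -/
def PairwiseDisjInds (S : Finset ABox) : Prop :=
  ∀ A ∈ S, ∀ B ∈ S, A ≠ B → Disjoint (ABoxInds A) (ABoxInds B)

/-! ## Queries -/

/-- Terms of a query: variables and individual names. -/
inductive Term : Type
  | var (x : ℕ)
  | ind (a : ℕ)
deriving DecidableEq

/-- Atoms of a query. -/
inductive Atom : Type
  | catom (A : ℕ) (t : Term)
  | ratom (r : ℕ) (t t' : Term)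
deriving DecidableEq

/-- A (Boolean) conjunctive query, viewed as its finite set of atoms;
all variables are (implicitly) existentially quantified. -/
abbrev CQ := Finset Atom

/-- A union of conjunctive queries. -/
abbrev UCQ := Finset CQ

def TermInds : Term → Finset ℕ
  | .var _ => ∅
  | .ind a => {a}

def AtomInds : Atom → Finset ℕ
  | .catom _ t => TermInds t
  | .ratom _ t t' => TermInds t ∪ TermInds t'

/-- Individual names occurring in a CQ. -/
def CQInds (q : CQ) : Finset ℕ := q.biUnion AtomInds

def UCQInds (q : UCQ) : Finset ℕ := q.biUnion CQInds

def AtomCNs : Atom → Finset ℕ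
  | .catom P _ => {P}
  | .ratom _ _ _ => ∅

/-- Concept names occurring in a CQ. -/
def CQCNs (q : CQ) : Finset ℕ := q.biUnion AtomCNs

def UCQCNs (q : UCQ) : Finset ℕ := q.biUnion CQCNs

def AtomGround : Atom → Prop
  | .catom _ t => ∃ a, t = Term.ind a
  | .ratom _ t t' => (∃ a, t = Term.ind a) ∧ (∃ a, t' = Term.ind a)

/-- A full CQ: no (existentially quantified) variables. -/
def CQIsFull (q : CQ) : Prop := ∀ α ∈ q, AtomGround α

def TermEval (I : Interp) (v : ℕ → I.Dom) : Term → I.Dom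
  | .var x => v x
  | .ind a => I.indI a

def Interp.SatAtom (I : Interp) (v : ℕ → I.Dom) : Atom → Prop
  | .catom P t => TermEval I v t ∈ I.concI P
  | .ratom r t t' => (TermEval I v t, TermEval I v t') ∈ I.roleI r

/-- `I ⊨ q` for a CQ `q`: there is a (strong) homomorphism of the atoms of `q`
into `I` that is the identity on individual names. -/
def Interp.SatCQ (I : Interp) (q : CQ) : Prop :=
  ∃ v : ℕ → I.Dom, ∀ α ∈ q, I.SatAtom v α

/-- `I ⊨ q` for a UCQ `q`: some disjunct is satisfied. -/
def Interp.SatUCQ (I : Interp) (q : UCQ) : Prop := ∃ p ∈ q, I.SatCQ p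

/-- `A ∪ O ⊨ Q(a)` for an atomic query. -/
def EntailsAQ (A : ABox) (O : Ontology) (Q a : ℕ) : Prop :=
  ∀ I : Interp, I.IsModelOf O → I.SatABox A → I.indI a ∈ I.concI Q

/-- `A ∪ O ⊨ q` for a CQ. -/
def EntailsCQ (A : ABox) (O : Ontology) (q : CQ) : Prop :=
  ∀ I : Interp, I.IsModelOf O → I.SatABox A → I.SatCQ q

/-- `A ∪ O ⊨ q` for a UCQ. -/
def EntailsUCQ (A : ABox) (O : Ontology) (q : UCQ) : Prop :=
  ∀ I : Interp, I.IsModelOf O → I.SatABox A → I.SatUCQ q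

/-! ## Examples and fitting -/

/-- An ABox-AQ example `(𝒜, Q(a))`. -/
abbrev AQEx := ABox × ℕ × ℕ

/-- An ABox-CQ (in particular, ABox-FullCQ) example `(𝒜, q)`. -/
abbrev CQEx := ABox × CQ

/-- An ABox-UCQ example `(𝒜, q)`. -/
abbrev UEx := ABox × UCQ

/-- `O` fits a collection of labeled ABox(-consistency) examples. -/
def FitsCons (O : Ontology) (Ep En : Finset ABox) : Prop :=
  (∀ A ∈ Ep, ConsistentWith A O) ∧ (∀ A ∈ En, ¬ ConsistentWith A O)

/-- `O` fits a collection of labeled ABox-AQ examples. -/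
def FitsAQ (O : Ontology) (Ep En : Finset AQEx) : Prop :=
  (∀ e ∈ Ep, EntailsAQ e.1 O e.2.1 e.2.2) ∧ (∀ e ∈ En, ¬ EntailsAQ e.1 O e.2.1 e.2.2)

/-- `O` fits a collection of labeled ABox-CQ examples. -/
def FitsCQ (O : Ontology) (Ep En : Finset CQEx) : Prop :=
  (∀ e ∈ Ep, EntailsCQ e.1 O e.2) ∧ (∀ e ∈ En, ¬ EntailsCQ e.1 O e.2)

/-- `O` fits a collection of labeled ABox-UCQ examples. -/
def FitsUCQ (O : Ontology) (Ep En : Finset UEx) : Prop :=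
  (∀ e ∈ Ep, EntailsUCQ e.1 O e.2) ∧ (∀ e ∈ En, ¬ EntailsUCQ e.1 O e.2)

/-- An example `(A, q)` is inconsistent if every ALCI-ontology `O` with
`A ∪ O ⊨ q` is inconsistent with `A`. -/
def InconsistentEx (A : ABox) (q : CQ) : Prop :=
  ∀ O : Ontology, OntologyInLang DL.alci O → EntailsCQ A O q → ¬ ConsistentWith A O

/-! ## Completions and refutation candidates -/

/-- The disjoint union `A⁻` of the ABoxes of the negative AQ examples
(the ABoxes of a collection have pairwise disjoint individual names, so the
disjoint union is the plain union). -/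
def NegUnionAQ (En : Finset AQEx) : ABox := En.sup Prod.fst

/-- The disjoint union `A⁻` of the ABoxes of the negative CQ examples. -/
def NegUnionCQ (En : Finset CQEx) : ABox := En.sup Prod.fst

/-- A completion for a collection of ABox-AQ examples: extends `A⁻` by concept
assertions `Q(b)` with `b ∈ ind(A⁻)` and `Q` occurring as an AQ in `E⁺`. -/
def IsCompletionAQ (Ep En : Finset AQEx) (C : ABox) : Prop :=
  NegUnionAQ En ⊆ C ∧
  ∀ α ∈ C, α ∈ NegUnionAQ En ∨
    ∃ Q b, α = Assertion.conc Q b ∧ b ∈ ABoxInds (NegUnionAQ En) ∧ ∃ e ∈ Ep, e.2.1 = Q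

/-- Refutation candidates for a collection of ABox-AQ examples. -/
inductive RefCandAQ (Ep : Finset AQEx) (base : ABox) : ABox → Prop
  | base : RefCandAQ Ep base base
  | step {C : ABox} {A : ABox} {Q a : ℕ} {h : ℕ → ℕ} :
      RefCandAQ Ep base C → (A, Q, a) ∈ Ep → ABoxHom h A C →
      RefCandAQ Ep base (insert (Assertion.conc Q (h a)) C)

/-- A completion for a collection of ABox-FullCQ examples: extends `A⁻` by
concept assertions `Q(b)` with `b ∈ ind(A⁻)` and `Q` occurring in a query of a
positive example. -/
def IsCompletionCQ (Ep En : Finset CQEx) (C : ABox) : Prop :=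
  NegUnionCQ En ⊆ C ∧
  ∀ α ∈ C, α ∈ NegUnionCQ En ∨
    ∃ Q b, α = Assertion.conc Q b ∧ b ∈ ABoxInds (NegUnionCQ En) ∧ ∃ e ∈ Ep, Q ∈ CQCNs e.2

/-- Refutation candidates for a collection of ABox-FullCQ examples. -/
inductive RefCandCQ (Ep : Finset CQEx) (base : ABox) : ABox → Prop
  | base : RefCandCQ Ep base base
  | step {C : ABox} {A : ABox} {q : CQ} {Q a : ℕ} {h : ℕ → ℕ} :
      RefCandCQ Ep base C → (A, q) ∈ Ep → ¬ InconsistentEx A q → ABoxHom h A C →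
      Atom.catom Q (Term.ind a) ∈ q →
      RefCandCQ Ep base (insert (Assertion.conc Q (h a)) C)

/-! ## Forest models, unravelings and `I_{A,h,L}` -/

/-- The edge relation of the graph of a forest model: some role edge, excluding
pairs of ABox individuals. -/
def ForestEdge (I : Interp) (A : ABox) (d e : I.Dom) : Prop :=
  (∃ r, (d, e) ∈ I.roleI r) ∧
  ¬ ∃ a ∈ ABoxInds A, ∃ b ∈ ABoxInds A, d = I.indI a ∧ e = I.indI b

/-- The undirected version of the graph of a forest model. -/
def ForestGraph (I : Interp) (A : ABox) : SimpleGraph I.Dom where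
  Adj d e := d ≠ e ∧ (ForestEdge I A d e ∨ ForestEdge I A e d)
  symm := ⟨fun _ _ h => ⟨h.1.symm, h.2.symm⟩⟩
  loopless := ⟨fun _ h => h.1 rfl⟩

/-- `I` is an `L`-forest model of the ABox `A`:
it is a model of `A`; role edges among ABox individuals are exactly those
asserted in `A`; and the remaining role edges form a forest (for ALC a
directed forest whose edges point away from the roots, for ALCI an
undirected forest). -/
def IsForestModel (L : DL) (I : Interp) (A : ABox) : Prop :=
  I.SatABox A ∧
  (∀ r a b, a ∈ ABoxInds A → b ∈ ABoxInds A →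
    ((I.indI a, I.indI b) ∈ I.roleI r ↔ Assertion.role r a b ∈ A)) ∧
  (match L with
    | DL.alc =>
        (∀ e : I.Dom, {d : I.Dom | ForestEdge I A d e}.Subsingleton) ∧
        WellFounded (fun d e : I.Dom => ForestEdge I A d e)
    | DL.alci =>
        (∀ d : I.Dom, ¬ ForestEdge I A d d) ∧ (ForestGraph I A).IsAcyclic)

/-- `e` is a neighbor of `d` in `I`. -/
def Neighbor (I : Interp) (d e : I.Dom) : Prop :=
  ∃ r, (d, e) ∈ I.roleI r ∨ (e, d) ∈ I.roleI r

/-- The degree of `I` (maximal number of neighbors) is at most `n`. -/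
def DegreeLE (I : Interp) (n : ℕ) : Prop :=
  ∀ d : I.Dom, ∃ s : Finset I.Dom, s.card ≤ n ∧ ∀ e : I.Dom, Neighbor I d e → e ∈ s

/-- The disjoint union of a family of interpretations (`pick` chooses, for
every individual name, the component interpreting it). -/
def Interp.disjUnion {ι : Type} (J : ι → Interp) (pick : ℕ → ι) : Interp where
  Dom := Σ i : ι, (J i).Dom
  indI := fun n => ⟨pick n, (J (pick n)).indI n⟩
  indI_inj := by
    intro m n hmn
    obtain ⟨h1, h2⟩ := Sigma.ext_iff.mp hmn
    dsimp only at h1 h2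
    rw [h1] at h2
    exact (J (pick n)).indI_inj (eq_of_heq h2)
  concI := fun P => {x | x.2 ∈ (J x.1).concI P}
  roleI := fun r => {p | ∃ (i : ι) (d e : (J i).Dom),
    p = (⟨i, d⟩, ⟨i, e⟩) ∧ (d, e) ∈ (J i).roleI r}

/-- `l` is a path in `I` starting at `d` (for `L = ALC`, only role names may
occur on the path; for `L = ALCI` also inverse roles). -/
def IsPathFrom (L : DL) (I : Interp) : I.Dom → List (DLRole × I.Dom) → Prop
  | _, [] => True
  | d, (r, e) :: l =>
      (d, e) ∈ I.rSem r ∧ (L = DL.alc → ∃ m, r = DLRole.name m) ∧ IsPathFrom L I e l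

/-- The tail (last element) of a path starting at `d`. -/
def PathTail (I : Interp) (d : I.Dom) (l : List (DLRole × I.Dom)) : I.Dom :=
  (l.getLast?).elim d Prod.snd

/-- Domain of `I_{A,h,L}`: individual names plus, for every individual name,
paths in `I` (elements not corresponding to `ind(A)` or to valid nonempty
paths are unlabeled and isolated junk). -/
abbrev IAhDom (I : Interp) : Type := ℕ ⊕ (ℕ × List (DLRole × I.Dom))

/-- The element of `I_{A,h,L}` given by the path `l` attached at individual
`a`; the root (empty path) is identified with `a` itself. -/
def IAhNode (I : Interp) (a : ℕ) : List (DLRole × I.Dom) → IAhDom I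
  | [] => Sum.inl a
  | l => Sum.inr (a, l)

/-- Validity of a path attached at `a` in `I_{A,h,L}`. -/
def IAhValid (L : DL) (I : Interp) (A : ABox) (h : ℕ → I.Dom)
    (a : ℕ) (l : List (DLRole × I.Dom)) : Prop :=
  a ∈ ABoxInds A ∧ IsPathFrom L I (h a) l

/-- The interpretation `I_{A,h,L}`: start from the interpretation with domain
`ind(A)`, concept memberships induced from `I` via `h`, and role edges exactly
the role assertions of `A`; then disjointly attach, for every `a ∈ ind(A)`,
the `L`-unraveling of `I` at `h(a)`, identifying its root with `a`. -/
def IAh (L : DL) (I : Interp) (A : ABox) (h : ℕ → I.Dom) : Interp where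
  Dom := IAhDom I
  indI := Sum.inl
  indI_inj := Sum.inl_injective
  concI := fun P => {x : IAhDom I |
    (∃ a, x = Sum.inl a ∧ a ∈ ABoxInds A ∧ h a ∈ I.concI P) ∨
    (∃ a l, x = Sum.inr (a, l) ∧ l ≠ [] ∧ IAhValid L I A h a l ∧
      PathTail I (h a) l ∈ I.concI P)}
  roleI := fun r => {p : IAhDom I × IAhDom I |
    (∃ a b, p.1 = Sum.inl a ∧ p.2 = Sum.inl b ∧ Assertion.role r a b ∈ A) ∨
    (∃ a l e, IAhValid L I A h a (l ++ [(DLRole.name r, e)]) ∧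
      p.1 = IAhNode I a l ∧ p.2 = IAhNode I a (l ++ [(DLRole.name r, e)])) ∨
    (∃ a l e, IAhValid L I A h a (l ++ [(DLRole.inv r, e)]) ∧
      p.1 = IAhNode I a (l ++ [(DLRole.inv r, e)]) ∧ p.2 = IAhNode I a l)}

/-- Restriction of an interpretation to the elements satisfying `P`
(elements outside `P` become unlabeled and isolated). -/
def Interp.restrictP (I : Interp) (P : I.Dom → Prop) : Interp where
  Dom := I.Dom
  indI := I.indI
  indI_inj := I.indI_inj
  concI := fun Q => {d | d ∈ I.concI Q ∧ P d}
  roleI := fun r => {p | p ∈ I.roleI r ∧ P p.1 ∧ P p.2}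

/-- Depth of elements of `I_{A,h,L}` (ABox individuals have depth 0). -/
def IAhDepthLE (I : Interp) (n : ℕ) : IAhDom I → Prop
  | Sum.inl _ => True
  | Sum.inr al => al.2.length ≤ n

/-! ## Sizes -/

/-- Size of a UCQ (number of atoms). -/
def UCQSize (q : UCQ) : ℕ := q.sum Finset.card

/-- Size of an ABox-UCQ example. -/
def UExSize (e : UEx) : ℕ := e.1.card + UCQSize e.2

/-- Size `||E||` of a collection of ABox-UCQ examples. -/
def ESize (Ep En : Finset UEx) : ℕ := Ep.sum UExSize + En.sum UExSize

/-- The (exponential) bound `bound(E)` on the degree: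
`||E⁻||` plus the sum over positive examples `(A,q)` of `(||(A,q)||+1)^{||q||}`. -/
def EBound (Ep En : Finset UEx) : ℕ :=
  En.sum UExSize + Ep.sum (fun e => (UExSize e + 1) ^ UCQSize e.2)

/-! ## Connectivity, components, variations -/

def ABoxAdj (A : ABox) (a b : ℕ) : Prop :=
  ∃ r, Assertion.role r a b ∈ A ∨ Assertion.role r b a ∈ A

/-- Connectivity of individuals in an ABox. -/
def ABoxConn (A : ABox) : ℕ → ℕ → Prop := Relation.ReflTransGen (ABoxAdj A)

/-- `B` is a maximally connected component of the ABox `A`. -/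
def IsComponent (B A : ABox) : Prop :=
  ∃ a ∈ ABoxInds A, ∀ α : Assertion,
    α ∈ B ↔ α ∈ A ∧ ∀ c ∈ AssertionInds α, ABoxConn A a c

def AtomTerms : Atom → Finset Term
  | .catom _ t => {t}
  | .ratom _ t t' => {t, t'}

/-- The terms (variables and individuals) occurring in a CQ. -/
def CQTerms (q : CQ) : Finset Term := q.biUnion AtomTerms

def CQAdj (q : CQ) (t t' : Term) : Prop :=
  ∃ r, Atom.ratom r t t' ∈ q ∨ Atom.ratom r t' t ∈ q

/-- A CQ is connected. -/
def CQConnected (q : CQ) : Prop :=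
  ∀ t ∈ CQTerms q, ∀ t' ∈ CQTerms q, Relation.ReflTransGen (CQAdj q) t t'

def SubstTerm (σ : ℕ → Term) : Term → Term
  | .var x => σ x
  | .ind a => Term.ind a

def SubstAtom (σ : ℕ → Term) : Atom → Atom
  | .catom P t => Atom.catom P (SubstTerm σ t)
  | .ratom r t t' => Atom.ratom r (SubstTerm σ t) (SubstTerm σ t')

/-- An `A`-variation of a CQ `p`: consistently replace zero or more variables by
individual names from `ind(A)` and possibly identify variables. -/
def IsVariation (A : ABox) (p p' : CQ) : Prop :=
  ∃ σ : ℕ → Term,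
    (∀ x : ℕ, (∃ y, σ x = Term.var y) ∨ ∃ a ∈ ABoxInds A, σ x = Term.ind a) ∧
    p' = p.image (SubstAtom σ)

def Assertion.toAtom : Assertion → Atom
  | .conc P a => Atom.catom P (Term.ind a)
  | .role r a b => Atom.ratom r (Term.ind a) (Term.ind b)

/-- The interpretation `I_q` induced by a CQ. -/
def CQInterp (p : CQ) : Interp where
  Dom := Term
  indI := Term.ind
  indI_inj := fun _ _ hab => Term.ind.inj hab
  concI := fun P => {t | Atom.catom P t ∈ p}
  roleI := fun r => {tt | Atom.ratom r tt.1 tt.2 ∈ p}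

/-- A proper `A`-variation. -/
def IsProperVariation (L : DL) (A : ABox) (p p' : CQ) : Prop :=
  IsVariation A p p' ∧
  (∀ r a b, Atom.ratom r (Term.ind a) (Term.ind b) ∈ p' → Assertion.role r a b ∈ A) ∧
  IsForestModel L (CQInterp p') (A.filter fun α => α.toAtom ∈ p')

/-- A weak homomorphism from a CQ into an interpretation (need not be the
identity on individual names). -/
def WeakHom (I : Interp) (g : Term → I.Dom) (p : CQ) : Prop :=
  (∀ P t, Atom.catom P t ∈ p → g t ∈ I.concI P) ∧
  (∀ r t t', Atom.ratom r t t' ∈ p → (g t, g t') ∈ I.roleI r)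

def ReachStep (L : DL) (I : Interp) (d e : I.Dom) : Prop :=
  match L with
  | DL.alc => ∃ r, (d, e) ∈ I.roleI r
  | DL.alci => ∃ r, (d, e) ∈ I.roleI r ∨ (e, d) ∈ I.roleI r

/-- `L`-reachability in an interpretation. -/
def Reach (L : DL) (I : Interp) : I.Dom → I.Dom → Prop :=
  Relation.ReflTransGen (ReachStep L I)

/-- Compatibility of a weak homomorphism `g` (from `p'` to `I`) with a
homomorphism `h` (from `A` to `I`). -/
def CompatibleWith (L : DL) (I : Interp) (A : ABox) (h : ℕ → I.Dom)
    (p' : CQ) (g : Term → I.Dom) : Prop :=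
  (∀ a ∈ CQInds p', g (Term.ind a) = h a) ∧
  (∀ x : ℕ, Term.var x ∈ CQTerms p' →
    ∃ a ∈ ABoxInds A, Reach L I (h a) (g (Term.var x)))

/-- Query classes. -/
inductive QClass : Type
  | aq
  | fullcq
  | cq
  | ucq

/-- A UCQ belongs to a query class. -/
def UCQInClass : QClass → UCQ → Prop
  | .aq, q => ∃ Q a, q = {({Atom.catom Q (Term.ind a)} : CQ)}
  | .fullcq, q => ∃ p : CQ, q = {p} ∧ CQIsFull p
  | .cq, q => ∃ p : CQ, q = {p}
  | .ucq, _ => True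


/-!
An inconsistent negative example `(A, q)` is refuted by an ontology exactly when `A` is
consistent with it, and so is `(A, X(a))` as soon as `X` does not occur in the ontology
(reinterpret `X` as empty). Since `X` does not occur in the examples, swapping `X` with a
fresh concept name in a fitting ontology keeps it fitting and removes `X` from it.
-/

namespace Concept

def CNs : Concept → Finset ℕ
  | top => ∅
  | atom A => {A}
  | neg C => C.CNs
  | inter C D => C.CNs ∪ D.CNs
  | ex _ C => C.CNs
  | atLeast _ _ C => C.CNs
  | atMost _ _ C => C.CNs

def rename (f : ℕ → ℕ) : Concept → Concept
  | top => top
  | atom A => atom (f A)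
  | neg C => neg (C.rename f)
  | inter C D => inter (C.rename f) (D.rename f)
  | ex r C => ex r (C.rename f)
  | atLeast n r C => atLeast n r (C.rename f)
  | atMost n r C => atMost n r (C.rename f)

theorem rename_id (C : Concept) : C.rename id = C := by
  induction C <;> simp_all [rename]

theorem rename_rename (f g : ℕ → ℕ) (C : Concept) :
    (C.rename f).rename g = C.rename (g ∘ f) := by
  induction C <;> simp_all [rename]

theorem rename_involutive {f : ℕ → ℕ} (hf : Function.Involutive f) :
    Function.Involutive (Concept.rename f) := fun C => by
  rw [rename_rename, hf.comp_self, rename_id]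

theorem CNs_rename (f : ℕ → ℕ) (C : Concept) : (C.rename f).CNs = C.CNs.image f := by
  induction C <;> simp_all [rename, CNs, Finset.image_union]

theorem invFree.rename {C : Concept} (f : ℕ → ℕ) (h : C.invFree) : (C.rename f).invFree := by
  induction C <;> simp_all [Concept.rename, invFree]

theorem countFree.rename {C : Concept} (f : ℕ → ℕ) (h : C.countFree) :
    (C.rename f).countFree := by
  induction C <;> simp_all [Concept.rename, countFree]

end Concept

namespace Ontology

def CNs (O : Ontology) : Finset ℕ := O.biUnion fun ci => ci.1.CNs ∪ ci.2.CNs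

def rename (f : ℕ → ℕ) (O : Ontology) : Ontology :=
  O.image (Prod.map (Concept.rename f) (Concept.rename f))

theorem rename_id (O : Ontology) : O.rename id = O := by
  simp [rename, funext Concept.rename_id]

theorem rename_rename_of_involutive {f : ℕ → ℕ} (hf : Function.Involutive f) (O : Ontology) :
    (O.rename f).rename f = O := by
  simp only [rename, Finset.image_image, Prod.map_comp_map,
    (Concept.rename_involutive hf).comp_self, Prod.map_id, Finset.image_id]

theorem CNs_rename (f : ℕ → ℕ) (O : Ontology) : (O.rename f).CNs = O.CNs.image f := by
  simp [CNs, rename, Finset.biUnion_image, Finset.image_biUnion, Concept.CNs_rename,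
    Finset.image_union]

end Ontology

theorem OntologyInLang.rename {L : DL} {O : Ontology} (f : ℕ → ℕ) (h : OntologyInLang L O) :
    OntologyInLang L (O.rename f) := by
  cases L <;>
  · simp only [OntologyInLang, Ontology.rename, Finset.forall_mem_image]
    intro ci hci
    have := h ci hci
    simp_all [Concept.invFree.rename, Concept.countFree.rename]

theorem OntologyInLang.to_alci {L : DL} {O : Ontology} (h : OntologyInLang L O) :
    OntologyInLang DL.alci O := by
  cases L
  · exact fun ci hci => ⟨(h ci hci).2.1, (h ci hci).2.2.2⟩
  · exact h

namespace Interp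

def withConc (I : Interp) (c : ℕ → Set I.Dom) : Interp :=
  { I with concI := c }

variable (I : Interp) {c : ℕ → Set I.Dom}

theorem rSem_withConc (r : DLRole) : (I.withConc c).rSem r = I.rSem r := by
  cases r <;> rfl

theorem cSem_withConc {f : ℕ → ℕ} (C : Concept) (h : ∀ P ∈ C.CNs, c P = I.concI (f P)) :
    (I.withConc c).cSem C = I.cSem (C.rename f) := by
  induction C <;> simp_all [cSem, Concept.rename, Concept.CNs, rSem_withConc] <;>
    first | rfl | exact h

theorem isModelOf_withConc_iff {f : ℕ → ℕ} {O : Ontology}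
    (h : ∀ P ∈ O.CNs, c P = I.concI (f P)) :
    (I.withConc c).IsModelOf O ↔ I.IsModelOf (O.rename f) := by
  simp only [IsModelOf, Ontology.rename, Finset.forall_mem_image]
  refine forall₂_congr fun ci hci => ?_
  simp only [Ontology.CNs, Finset.mem_biUnion, Finset.mem_union] at h
  rw [I.cSem_withConc ci.1 fun P hP => h P ⟨ci, hci, .inl hP⟩,
    I.cSem_withConc ci.2 fun P hP => h P ⟨ci, hci, .inr hP⟩]
  rfl

theorem satABox_withConc_iff {B : ABox} (h : ∀ P ∈ ABoxCNs B, c P = I.concI P) :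
    (I.withConc c).SatABox B ↔ I.SatABox B := by
  refine forall₂_congr fun α hα => ?_
  cases α with
  | conc P b =>
    have hP : P ∈ ABoxCNs B := Finset.mem_biUnion.2 ⟨_, hα, by simp [AssertionCNs]⟩
    show I.indI b ∈ c P ↔ I.indI b ∈ I.concI P
    rw [h P hP]
  | role r b b' => rfl

theorem satCQ_withConc_iff {p : CQ} (h : ∀ P ∈ CQCNs p, c P = I.concI P) :
    (I.withConc c).SatCQ p ↔ I.SatCQ p := by
  refine exists_congr fun v => forall₂_congr fun α hα => ?_
  cases α with
  | catom P t =>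
    have hP : P ∈ CQCNs p := Finset.mem_biUnion.2 ⟨_, hα, by simp [AtomCNs]⟩
    show TermEval I v t ∈ c P ↔ TermEval I v t ∈ I.concI P
    rw [h P hP]
  | ratom r t t' => rfl

end Interp

theorem EntailsCQ.rename {B : ABox} {O : Ontology} {p : CQ} (f : ℕ → ℕ)
    (hB : ∀ P ∈ ABoxCNs B, f P = P) (hp : ∀ P ∈ CQCNs p, f P = P) (h : EntailsCQ B O p) :
    EntailsCQ B (O.rename f) p := by
  intro I hIO hIB
  have hJO : (I.withConc (I.concI ∘ f)).IsModelOf O :=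
    (I.isModelOf_withConc_iff fun _ _ => rfl).2 hIO
  have hJB : (I.withConc (I.concI ∘ f)).SatABox B :=
    (I.satABox_withConc_iff fun P hP => congrArg I.concI (hB P hP)).2 hIB
  exact (I.satCQ_withConc_iff fun P hP => congrArg I.concI (hp P hP)).1 (h _ hJO hJB)

theorem entailsCQ_rename_iff {B : ABox} {O : Ontology} {p : CQ} {f : ℕ → ℕ}
    (hf : Function.Involutive f) (hB : ∀ P ∈ ABoxCNs B, f P = P)
    (hp : ∀ P ∈ CQCNs p, f P = P) :
    EntailsCQ B (O.rename f) p ↔ EntailsCQ B O p :=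
  ⟨fun h => O.rename_rename_of_involutive hf ▸ h.rename f hB hp, EntailsCQ.rename f hB hp⟩

theorem consistentWith_of_not_entailsCQ {B : ABox} {O : Ontology} {p : CQ}
    (h : ¬ EntailsCQ B O p) : ConsistentWith B O := by
  by_contra hc
  exact h fun I hIO hIB => (hc ⟨I, hIO, hIB⟩).elim

theorem not_entailsCQ_catom_of_fresh {B : ABox} {O : Ontology} {X : ℕ}
    (hcons : ConsistentWith B O) (hO : X ∉ O.CNs) (hB : X ∉ ABoxCNs B) (a : ℕ) :
    ¬ EntailsCQ B O {Atom.catom X (Term.ind a)} := by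
  obtain ⟨I, hIO, hIB⟩ := hcons
  have hc : ∀ P, P ≠ X → Function.update I.concI X ∅ P = I.concI P :=
    fun P hP => Function.update_of_ne hP _ _
  intro h
  obtain ⟨v, hv⟩ := h (I.withConc (Function.update I.concI X ∅))
    ((I.isModelOf_withConc_iff (f := id) fun P hP => hc P (ne_of_mem_of_not_mem hP hO)).2
      (by rwa [Ontology.rename_id]))
    ((I.satABox_withConc_iff fun P hP => hc P (ne_of_mem_of_not_mem hP hB)).2 hIB)
  have hXa : I.indI a ∈ Function.update I.concI X ∅ X := hv _ (Finset.mem_singleton_self _)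
  simp at hXa

theorem exists_fitsCQ_avoiding {L : DL} {O : Ontology} {Ep En : Finset CQEx} {X : ℕ}
    (hL : OntologyInLang L O) (hfit : FitsCQ O Ep En)
    (hX : ∀ e ∈ Ep ∪ En, X ∉ ABoxCNs e.1 ∧ X ∉ CQCNs e.2) :
    ∃ O' : Ontology, OntologyInLang L O' ∧ FitsCQ O' Ep En ∧ X ∉ O'.CNs := by
  obtain ⟨X', hX'⟩ := Infinite.exists_notMem_finset
    (O.CNs ∪ (Ep ∪ En).biUnion fun e => ABoxCNs e.1 ∪ CQCNs e.2)
  obtain ⟨hX'O, hX'E⟩ := Finset.notMem_union.1 hX'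
  have hfix : ∀ e ∈ Ep ∪ En, ∀ P ∈ ABoxCNs e.1 ∪ CQCNs e.2, Equiv.swap X X' P = P := by
    intro e he P hP
    refine Equiv.swap_apply_of_ne_of_ne (fun h => ?_) (fun h => hX'E (Finset.mem_biUnion.2 ⟨e, he, h ▸ hP⟩))
    subst h
    exact (Finset.mem_union.1 hP).elim (hX e he).1 (hX e he).2
  have hiff : ∀ e ∈ Ep ∪ En,
      EntailsCQ e.1 (O.rename (Equiv.swap X X')) e.2 ↔ EntailsCQ e.1 O e.2 :=
    fun e he => entailsCQ_rename_iff (Equiv.swap_apply_self X X')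
      (fun P hP => hfix e he P (Finset.mem_union_left _ hP))
      (fun P hP => hfix e he P (Finset.mem_union_right _ hP))
  refine ⟨O.rename (Equiv.swap X X'), hL.rename _,
    ⟨fun e he => (hiff e (Finset.mem_union_left _ he)).2 (hfit.1 e he),
     fun e he => (hiff e (Finset.mem_union_right _ he)).not.2 (hfit.2 e he)⟩, ?_⟩
  rw [Ontology.CNs_rename, Finset.mem_image]
  rintro ⟨P, hP, hPX⟩
  rw [Equiv.swap_apply_eq_iff, Equiv.swap_apply_left] at hPX
  exact hX'O (hPX ▸ hP)

theorem fullcq_remove_inconsistent_negative_general (L : DL) (Ep En : Finset CQEx)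
    (A : ABox) (q : CQ) (X a : ℕ)
    (hmem : (A, q) ∈ En) (hinc : InconsistentEx A q)
    (hX : ∀ e ∈ Ep ∪ En, X ∉ ABoxCNs e.1 ∧ X ∉ CQCNs e.2) :
    (∃ O : Ontology, OntologyInLang L O ∧ FitsCQ O Ep En) ↔
      (∃ O : Ontology, OntologyInLang L O ∧
        FitsCQ O Ep
          (insert (A, ({Atom.catom X (Term.ind a)} : CQ)) (En.erase (A, q)))) := by
  constructor
  · rintro ⟨O, hL, hfit⟩
    obtain ⟨O', hL', hfit', hXO'⟩ := exists_fitsCQ_avoiding hL hfit hX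
    refine ⟨O', hL', hfit'.1, fun e he => ?_⟩
    rcases Finset.mem_insert.1 he with rfl | he
    · exact not_entailsCQ_catom_of_fresh (consistentWith_of_not_entailsCQ (hfit'.2 _ hmem))
        hXO' (hX _ (Finset.mem_union_right _ hmem)).1 a
    · exact hfit'.2 e (Finset.mem_of_mem_erase he)
  · rintro ⟨O, hL, hpos, hneg⟩
    refine ⟨O, hL, hpos, fun e he => ?_⟩
    by_cases heq : e = (A, q)
    · subst heq
      have hcons := consistentWith_of_not_entailsCQ (hneg _ (Finset.mem_insert_self _ _))
      exact fun hent => hinc O hL.to_alci hent hcons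
    · exact hneg e (Finset.mem_insert_of_mem (Finset.mem_erase.2 ⟨heq, he⟩))

/-- Replacing an inconsistent negative ABox-FullCQ example
`(A, q)` by the negative example `(A, X(a))`, with `X` a concept name not
mentioned in `E` and `a ∈ ind(A)`, preserves the existence of a fitting
`L`-ontology. -/
theorem fullcq_remove_inconsistent_negative (L : DL) (Ep En : Finset CQEx)
    (A : ABox) (q : CQ) (X a : ℕ)
    (hfull : ∀ e ∈ Ep ∪ En, CQIsFull e.2)
    (hwfq : ∀ e ∈ Ep ∪ En, CQInds e.2 ⊆ ABoxInds e.1)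
    (hdisj : PairwiseDisjInds ((Ep ∪ En).image Prod.fst))
    (hmem : (A, q) ∈ En) (hinc : InconsistentEx A q) (ha : a ∈ ABoxInds A)
    (hX : ∀ e ∈ Ep ∪ En, X ∉ ABoxCNs e.1 ∧ X ∉ CQCNs e.2) :
    (∃ O : Ontology, OntologyInLang L O ∧ FitsCQ O Ep En) ↔
      (∃ O : Ontology, OntologyInLang L O ∧
        FitsCQ O Ep
          (insert (A, ({Atom.catom X (Term.ind a)} : CQ)) (En.erase (A, q)))) :=
  fullcq_remove_inconsistent_negative_general L Ep En A q X a hmem hinc hX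

end DLFit
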